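/- Suppose s ≥ 3 and r ≥ s+1. Then for every integer k ≥ 1, ((r−1)(s−1))^k + ζ_1^k + ζ_2^k − 1 > 0 (this quantity being real); equivalently, δ_k > −1 for all k ≥ 1, where δ_k = (ζ_1^k + ζ_2^k − 1)/((r−1)(s−1))^k. -/

import Mathlib

/-!
The monic quadratic `(z - ζ₁)(z - ζ₂)` has real coefficients, so its roots are either both real
or complex conjugate; in either case the power sums `ζ₁ ^ k + ζ₂ ^ k` are real. With
`|ζ₁ + ζ₂| ≤ s - 1` and `0 ≤ ζ₁ ζ₂ ≤ (s - 1)²`, both roots have modulus at most `s - 1`: a real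
root of larger modulus would make the quadratic positive, and for conjugate roots
`|ζ₁|² = ζ₁ ζ₂`. Hence `|ζ₁ ^ k + ζ₂ ^ k| ≤ 2 (s - 1) ^ k < ((r - 1)(s - 1)) ^ k - 1`, as
`r - 1 ≥ 3` and `s - 1 ≥ 2`.
-/

open ComplexConjugate

namespace Complex

variable {z₁ z₂ : ℂ} {p q : ℝ}

theorem conj_eq_self_or_conj_eq_of_add_of_mul (hsum : z₁ + z₂ = p) (hprod : z₁ * z₂ = q) :
    conj z₁ = z₁ ∨ conj z₁ = z₂ := by
  have hsum' := congrArg conj hsum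
  have hprod' := congrArg conj hprod
  simp only [map_add, map_mul, conj_ofReal] at hsum' hprod'
  have h : (conj z₁ - z₁) * (conj z₁ - z₂) = 0 := by
    linear_combination (-conj z₁) * hsum + hprod + conj z₁ * hsum' - hprod'
  rcases mul_eq_zero.mp h with h | h
  · exact Or.inl (sub_eq_zero.mp h)
  · exact Or.inr (sub_eq_zero.mp h)

theorem im_pow_add_pow_eq_zero (hsum : z₁ + z₂ = p) (hprod : z₁ * z₂ = q) (k : ℕ) :
    (z₁ ^ k + z₂ ^ k).im = 0 := by
  rw [← conj_eq_iff_im, map_add, map_pow, map_pow]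
  rcases conj_eq_self_or_conj_eq_of_add_of_mul hsum hprod with h | h
  · have h₂ : conj z₂ = z₂ := by
      have := congrArg conj hsum
      rw [map_add, h, conj_ofReal, ← hsum] at this
      exact add_left_cancel this
    rw [h, h₂]
  · rw [h, ← h, conj_conj, add_comm]

theorem norm_le_of_add_of_mul {B : ℝ} (hsum : z₁ + z₂ = p) (hprod : z₁ * z₂ = q)
    (hp : |p| ≤ B) (hq : 0 ≤ q) (hqB : q ≤ B ^ 2) : ‖z₁‖ ≤ B := by
  have hB : 0 ≤ B := (abs_nonneg p).trans hp
  rcases conj_eq_self_or_conj_eq_of_add_of_mul hsum hprod with h | h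
  · obtain ⟨x, rfl⟩ := conj_eq_iff_real.mp h
    have hroot : x ^ 2 - p * x + q = 0 := by
      have : (x : ℂ) ^ 2 - p * x + q = 0 := by linear_combination (x : ℂ) * hsum - hprod
      exact_mod_cast this
    rw [norm_real, Real.norm_eq_abs]
    by_contra! hx
    rcases abs_cases p with ⟨hp', _⟩ | ⟨hp', _⟩ <;> rcases abs_cases x with ⟨hx', _⟩ | ⟨hx', _⟩ <;>
      nlinarith
  · have hnorm : ‖z₁‖ ^ 2 = q := by
      rw [Complex.sq_norm, ← ofReal_inj, ← mul_conj, h, hprod]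
    nlinarith [norm_nonneg z₁]

theorem neg_two_mul_pow_le_re_pow_add_pow {B : ℝ} (h₁ : ‖z₁‖ ≤ B) (h₂ : ‖z₂‖ ≤ B) (k : ℕ) :
    -(2 * B ^ k) ≤ (z₁ ^ k + z₂ ^ k).re := by
  have hk₁ := pow_le_pow_left₀ (norm_nonneg z₁) h₁ k
  have hk₂ := pow_le_pow_left₀ (norm_nonneg z₂) h₂ k
  calc -(2 * B ^ k) ≤ -(‖z₁‖ ^ k + ‖z₂‖ ^ k) := by linarith
    _ ≤ -‖z₁ ^ k + z₂ ^ k‖ := by rw [← norm_pow, ← norm_pow]; exact neg_le_neg (norm_add_le _ _)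
    _ ≤ (z₁ ^ k + z₂ ^ k).re := neg_le_of_abs_le (abs_re_le_norm _)

end Complex

theorem two_mul_pow_add_one_lt_mul_pow {a b : ℝ} (ha : 3 ≤ a) (hb : 1 < b) {k : ℕ} (hk : k ≠ 0) :
    2 * b ^ k + 1 < (a * b) ^ k := by
  have hbk : 1 < b ^ k := one_lt_pow₀ hb hk
  have hak : 3 ≤ a ^ k := ha.trans (le_self_pow₀ (by linarith) hk)
  rw [mul_pow]
  nlinarith

section Coefficients

variable {r s : ℝ}

theorem abs_sum_coeff_le (hs : 3 ≤ s) (hr : s + 1 ≤ r) :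
    |(r * s ^ 2 - s ^ 2 - 2 * r * s + r + 2) / (r * s - r - s)| ≤ s - 1 := by
  have hD : 0 < r * s - r - s := by nlinarith
  rw [abs_of_pos (div_pos (by nlinarith) hD), div_le_iff₀ hD]
  nlinarith

theorem prod_coeff_nonneg (hs : 3 ≤ s) (hr : s + 1 ≤ r) :
    0 ≤ (s - 1) * (s - 2) * (r - 1) / (r * s - r - s) := by
  have hD : 0 < r * s - r - s := by nlinarith
  exact div_nonneg (mul_nonneg (mul_nonneg (by linarith) (by linarith)) (by linarith)) hD.le

theorem prod_coeff_le (hs : 3 ≤ s) (hr : s + 1 ≤ r) :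
    (s - 1) * (s - 2) * (r - 1) / (r * s - r - s) ≤ (s - 1) ^ 2 := by
  have hD : 0 < r * s - r - s := by nlinarith
  have h : (s - 2) * (r - 1) ≤ (s - 1) * (r * s - r - s) := by nlinarith
  rw [div_le_iff₀ hD]
  nlinarith [mul_le_mul_of_nonneg_left h (by linarith : (0 : ℝ) ≤ s - 1)]

end Coefficients

theorem stmt_3 (r s : ℤ) (hs : 3 ≤ s) (hr : s + 1 ≤ r) (ζ1 ζ2 : ℂ)
    (hsum : ζ1 + ζ2 =
      -(((r * s ^ 2 - s ^ 2 - 2 * r * s + r + 2 : ℤ) : ℂ) / ((r * s - r - s : ℤ) : ℂ)))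
    (hprod : ζ1 * ζ2 =
      (((s - 1) * (s - 2) * (r - 1) : ℤ) : ℂ) / ((r * s - r - s : ℤ) : ℂ)) :
    ∀ k : ℕ, 1 ≤ k →
      (ζ1 ^ k + ζ2 ^ k).im = 0 ∧
      0 < (((r - 1) * (s - 1) : ℤ) : ℝ) ^ k + (ζ1 ^ k + ζ2 ^ k).re - 1 := by
  intro k hk
  have hsR : (3 : ℝ) ≤ s := by exact_mod_cast hs
  have hrR : (s : ℝ) + 1 ≤ r := by exact_mod_cast hr
  set p : ℝ := -((r * s ^ 2 - s ^ 2 - 2 * r * s + r + 2) / (r * s - r - s)) with hp_def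
  set q : ℝ := (s - 1) * (s - 2) * (r - 1) / (r * s - r - s) with hq_def
  have hsum' : ζ1 + ζ2 = p := by rw [hsum, hp_def]; push_cast; ring
  have hprod' : ζ1 * ζ2 = q := by rw [hprod, hq_def]; push_cast; ring
  have hp : |p| ≤ s - 1 := by rw [abs_neg]; exact abs_sum_coeff_le hsR hrR
  have hq := prod_coeff_nonneg hsR hrR
  have hqB := prod_coeff_le hsR hrR
  have hnorm₁ : ‖ζ1‖ ≤ s - 1 := Complex.norm_le_of_add_of_mul hsum' hprod' hp hq hqB
  have hnorm₂ : ‖ζ2‖ ≤ s - 1 :=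
    Complex.norm_le_of_add_of_mul (add_comm ζ2 ζ1 ▸ hsum') (mul_comm ζ2 ζ1 ▸ hprod') hp hq hqB
  refine ⟨Complex.im_pow_add_pow_eq_zero hsum' hprod' k, ?_⟩
  have hre := Complex.neg_two_mul_pow_le_re_pow_add_pow hnorm₁ hnorm₂ k
  have hgrowth := two_mul_pow_add_one_lt_mul_pow (a := (r : ℝ) - 1) (b := (s : ℝ) - 1)
    (by linarith) (by linarith) (Nat.one_le_iff_ne_zero.mp hk)
  push_cast
  linarith
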